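/- arXiv:2406.03148 — 7 statements merged into one kernel-verified Lean document; each statement's English description precedes it below -/
import Mathlib

section
/- Let G be a finite simple graph on vertex set {1,…,n} (no self-loops) in which every vertex has at least one neighbor, with adjacency matrix A and diagonal degree matrix D. Let P ∈ ℝ^{n×d} be adjacency-identifying, with witness matrices W^Q, W^K ∈ ℝ^{d×d}. Then for every ε > 0 there exist b > 0 and δ > 0 such that for every Q ∈ ℝ^{n×d} with ‖P − Q‖_F < δ, writing Q̃ = (1/√d_k)·(Q W^Q)(Q W^K)ᵀ, one has ‖softmax(b·Q̃) − D^{−1}A‖_F < ε. -/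
open Matrix

/-- Softmax of a real vector. -/
noncomputable def softmax {m : Type*} [Fintype m] (z : m → ℝ) (j : m) : ℝ :=
  Real.exp (z j) / ∑ l, Real.exp (z l)

/-- Row-wise softmax of a matrix. -/
noncomputable def rowSoftmax {n m : Type*} [Fintype m] (Z : Matrix n m ℝ) : Matrix n m ℝ :=
  Matrix.of fun i j => softmax (Z i) j

/-- The Frobenius norm of a real matrix. -/
noncomputable def frobNorm {m n : Type*} [Fintype m] [Fintype n] (M : Matrix m n ℝ) : ℝ :=
  Real.sqrt (∑ i, ∑ j, (M i j) ^ 2)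

/-- The unnormalized attention matrix `(1/√d_k)·(P W^Q)(P W^K)ᵀ`. -/
noncomputable def attn {n : ℕ} {m : Type*} [Fintype m] (dk : ℝ)
    (P : Matrix (Fin n) m ℝ) (WQ WK : Matrix m m ℝ) : Matrix (Fin n) (Fin n) ℝ :=
  (1 / Real.sqrt dk) • ((P * WQ) * (P * WK)ᵀ)

/-!
As `b → ∞`, `softmax (b • z)` concentrates uniformly on the maximizers of `z`: after dividing
numerator and denominator by `exp (b * max z)`, every term `exp (b * (z l - max z))` tends to `1`
or `0` according as `z l` is maximal or not. For an adjacency-identifying `P` the maximizers of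
row `i` of `P̃` are exactly the neighbours of `i`, so `softmax (b • P̃) → D⁻¹A`. Finally, for fixed
`b` the map `Q ↦ softmax (b • Q̃)` is continuous, and Frobenius-closeness implies entrywise
closeness.
-/

open Filter Topology Finset

section Softmax

variable {m : Type*} [Fintype m]

noncomputable def argmaxFinset (z : m → ℝ) : Finset m := {j | ∀ l, z l ≤ z j}

lemma mem_argmaxFinset_iff_eq {z : m → ℝ} {j₀ : m} (hj₀ : ∀ l, z l ≤ z j₀) (j : m) :
    j ∈ argmaxFinset z ↔ z j = z j₀ := by
  simp only [argmaxFinset, mem_filter, mem_univ, true_and]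
  exact ⟨fun h => le_antisymm (hj₀ j) (h j₀), fun h l => h ▸ hj₀ l⟩

lemma softmax_smul_eq_of_shift (b c : ℝ) (z : m → ℝ) (j : m) :
    softmax (b • z) j = Real.exp (b * (z j - c)) / ∑ l, Real.exp (b * (z l - c)) := by
  have hshift : ∀ l, Real.exp (b * (z l - c)) = Real.exp (b * z l) * Real.exp (-(b * c)) := by
    intro l
    rw [← Real.exp_add]
    ring_nf
  simp only [softmax, Pi.smul_apply, smul_eq_mul, hshift, ← Finset.sum_mul]
  rw [mul_div_mul_right _ _ (Real.exp_ne_zero _)]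

lemma tendsto_exp_mul_sub_max_atTop [DecidableEq m] {z : m → ℝ} {j₀ : m}
    (hj₀ : ∀ l, z l ≤ z j₀) (l : m) :
    Tendsto (fun b : ℝ => Real.exp (b * (z l - z j₀))) atTop
      (𝓝 (if l ∈ argmaxFinset z then 1 else 0)) := by
  by_cases hl : l ∈ argmaxFinset z
  · simp [hl, (mem_argmaxFinset_iff_eq hj₀ l).mp hl]
  · have hneg : z l - z j₀ < 0 :=
      sub_neg.mpr <| (hj₀ l).lt_of_ne fun h => hl ((mem_argmaxFinset_iff_eq hj₀ l).mpr h)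
    simpa [hl] using tendsto_id.atTop_mul_const_of_neg hneg

lemma tendsto_softmax_smul_atTop [DecidableEq m] (z : m → ℝ) (j : m) :
    Tendsto (fun b : ℝ => softmax (b • z) j) atTop
      (𝓝 ((if j ∈ argmaxFinset z then 1 else 0) / #(argmaxFinset z))) := by
  have : Nonempty m := ⟨j⟩
  obtain ⟨j₀, hj₀⟩ := Finite.exists_max z
  have hcard : (#(argmaxFinset z) : ℝ) ≠ 0 := by
    have : j₀ ∈ argmaxFinset z := (mem_argmaxFinset_iff_eq hj₀ j₀).mpr rfl
    exact_mod_cast (card_pos.mpr ⟨j₀, this⟩).ne'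
  have hden : Tendsto (fun b : ℝ => ∑ l, Real.exp (b * (z l - z j₀))) atTop
      (𝓝 #(argmaxFinset z)) := by
    simpa using tendsto_finsetSum univ fun l _ => tendsto_exp_mul_sub_max_atTop hj₀ l
  exact ((tendsto_exp_mul_sub_max_atTop hj₀ j).div hden hcard).congr fun b =>
    (softmax_smul_eq_of_shift b (z j₀) z j).symm

lemma tendsto_rowSoftmax_smul_atTop [DecidableEq m] {n : Type*} (Z : Matrix n m ℝ) :
    Tendsto (fun b : ℝ => rowSoftmax (b • Z)) atTop
      (𝓝 (Matrix.of fun i j =>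
        (if j ∈ argmaxFinset (Z i) then 1 else 0) / #(argmaxFinset (Z i)))) :=
  tendsto_pi_nhds.mpr fun i => tendsto_pi_nhds.mpr fun j =>
    tendsto_softmax_smul_atTop (Z i) j

lemma continuous_softmax : Continuous (softmax : (m → ℝ) → m → ℝ) := by
  refine continuous_pi fun j => ?_
  have : Nonempty m := ⟨j⟩
  have hexp : ∀ l : m, Continuous fun z : m → ℝ => Real.exp (z l) :=
    fun l => Real.continuous_exp.comp (continuous_apply l)
  exact (hexp j).div (continuous_finsetSum _ fun l _ => hexp l) fun z =>
    (sum_pos (fun l _ => Real.exp_pos (z l)) univ_nonempty).ne'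

lemma continuous_rowSoftmax {n : Type*} :
    Continuous (rowSoftmax : Matrix n m ℝ → Matrix n m ℝ) :=
  continuous_pi fun i => continuous_softmax.comp (continuous_apply i)

end Softmax

section Frobenius

variable {m n : Type*} [Fintype m] [Fintype n]

lemma continuous_frobNorm : Continuous (frobNorm : Matrix m n ℝ → ℝ) :=
  Real.continuous_sqrt.comp <| continuous_finsetSum _ fun i _ =>
    continuous_finsetSum _ fun j _ => ((continuous_apply_apply i j).pow 2)

lemma abs_apply_le_frobNorm (M : Matrix m n ℝ) (i : m) (j : n) : |M i j| ≤ frobNorm M := by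
  rw [← Real.sqrt_sq_eq_abs]
  refine Real.sqrt_le_sqrt ?_
  calc M i j ^ 2 ≤ ∑ j', M i j' ^ 2 :=
        single_le_sum (f := fun j' => M i j' ^ 2) (fun _ _ => sq_nonneg _) (mem_univ j)
    _ ≤ ∑ i', ∑ j', M i' j' ^ 2 :=
        single_le_sum (f := fun i' => ∑ j', M i' j' ^ 2)
          (fun _ _ => sum_nonneg fun _ _ => sq_nonneg _) (mem_univ i)

/-- `Matrix` carries no metric instance; this compares with the sup distance on `m → n → ℝ`. -/
lemma dist_le_frobNorm_sub (M N : m → n → ℝ) : dist M N ≤ frobNorm (M - N) := by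
  have hnonneg : 0 ≤ frobNorm (M - N) := Real.sqrt_nonneg _
  refine (dist_pi_le_iff hnonneg).mpr fun i => (dist_pi_le_iff hnonneg).mpr fun j => ?_
  simpa [Real.dist_eq] using abs_apply_le_frobNorm (M - N) i j

end Frobenius

lemma continuous_attn {n d : ℕ} (dk : ℝ) (WQ WK : Matrix (Fin d) (Fin d) ℝ) :
    Continuous fun P : Matrix (Fin n) (Fin d) ℝ => attn dk P WQ WK := by
  unfold attn
  fun_prop

theorem stmt3_general {n d : ℕ} (G : SimpleGraph (Fin n)) [DecidableRel G.Adj]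
    (dk : ℝ)
    (P : Matrix (Fin n) (Fin d) ℝ) (WQ WK : Matrix (Fin d) (Fin d) ℝ)
    (hP : ∀ i j, (∀ l, attn dk P WQ WK i l ≤ attn dk P WQ WK i j) ↔ G.Adj i j)
    (DinvA : Matrix (Fin n) (Fin n) ℝ)
    (hDinvA : ∀ i j, DinvA i j = G.adjMatrix ℝ i j / (G.degree i : ℝ)) :
    ∀ ε : ℝ, 0 < ε → ∃ b δ : ℝ, 0 < b ∧ 0 < δ ∧
      ∀ Q : Matrix (Fin n) (Fin d) ℝ, frobNorm (P - Q) < δ →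
        frobNorm (rowSoftmax (b • attn dk Q WQ WK) - DinvA) < ε := by
  intro ε hε
  have hargmax : ∀ i, argmaxFinset (attn dk P WQ WK i) = G.neighborFinset i := fun i => by
    ext j
    simp [argmaxFinset, hP i j]
  have hlim : Tendsto (fun b : ℝ => rowSoftmax (b • attn dk P WQ WK)) atTop (𝓝 DinvA) := by
    convert tendsto_rowSoftmax_smul_atTop (attn dk P WQ WK) using 2
    ext i j
    simp [hDinvA, hargmax, SimpleGraph.adjMatrix_apply,
      ← SimpleGraph.card_neighborFinset_eq_degree]
  have herr := (continuous_frobNorm.tendsto 0).comp (tendsto_sub_nhds_zero_iff.mpr hlim)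
  obtain ⟨b, hb, hbP⟩ := ((eventually_gt_atTop 0).and
    (herr.eventually (gt_mem_nhds (by simpa [frobNorm] using hε)))).exists
  have hnear : ∀ᶠ Q : Fin n → Fin d → ℝ in 𝓝 P,
      frobNorm (rowSoftmax (b • attn dk Q WQ WK) - DinvA) < ε :=
    ((continuous_frobNorm.comp ((continuous_rowSoftmax.comp
      ((continuous_attn dk WQ WK).const_smul b)).sub continuous_const)).tendsto P).eventually
      (gt_mem_nhds hbP)
  obtain ⟨δ, hδ, hball⟩ := Metric.eventually_nhds_iff.mp hnear
  exact ⟨b, δ, hb, hδ, fun Q hQ => hball ((dist_comm _ _).trans_le (dist_le_frobNorm_sub P Q)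
    |>.trans_lt hQ)⟩

/-- for an adjacency-identifying `P` (with witnesses `W^Q, W^K`), the row-wise
softmax of `b • Q̃` approximates the row-normalized adjacency matrix `D⁻¹A` for every `Q`
sufficiently close to `P` in Frobenius norm. -/
theorem stmt3 {n d : ℕ} (G : SimpleGraph (Fin n)) [DecidableRel G.Adj]
    (hdeg : ∀ v, 0 < G.degree v)
    (dk : ℝ) (hdk : 0 < dk)
    (P : Matrix (Fin n) (Fin d) ℝ) (WQ WK : Matrix (Fin d) (Fin d) ℝ)
    (hP : ∀ i j, (∀ l, attn dk P WQ WK i l ≤ attn dk P WQ WK i j) ↔ G.Adj i j)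
    (DinvA : Matrix (Fin n) (Fin n) ℝ)
    (hDinvA : ∀ i j, DinvA i j = G.adjMatrix ℝ i j / (G.degree i : ℝ)) :
    ∀ ε : ℝ, 0 < ε → ∃ b δ : ℝ, 0 < b ∧ 0 < δ ∧
      ∀ Q : Matrix (Fin n) (Fin d) ℝ, frobNorm (P - Q) < δ →
        frobNorm (rowSoftmax (b • attn dk Q WQ WK) - DinvA) < ε :=
  stmt3_general G dk P WQ WK hP DinvA hDinvA
end

section
/- Let G be a finite simple graph on vertex set {1,…,n} (no self-loops) in which every vertex has at least one neighbor, with graph Laplacian L. If a matrix P ∈ ℝ^{n×d} admits matrices W^Q, W^K ∈ ℝ^{d×d} with (1/√d_k)·(P W^Q)(P W^K)ᵀ = L, then P is both node-identifying and adjacency-identifying. -/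
open Matrix

/-- `P` is node-identifying: for some `W^Q, W^K`, the `(i,j)` entry of
`(1/√d_k)·(P W^Q)(P W^K)ᵀ` is a maximum of its row exactly when `i = j`. -/
def IsNodeIdentifying {n : ℕ} {m : Type*} [Fintype m] (dk : ℝ)
    (P : Matrix (Fin n) m ℝ) : Prop :=
  ∃ WQ WK : Matrix m m ℝ, ∀ i j,
    (∀ l, attn dk P WQ WK i l ≤ attn dk P WQ WK i j) ↔ i = j

/-- `P` is adjacency-identifying: for some `W^Q, W^K`, the `(i,j)` entry of
`(1/√d_k)·(P W^Q)(P W^K)ᵀ` is a maximum of its row exactly when `i` and `j` are adjacent. -/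
def IsAdjIdentifying {n : ℕ} {m : Type*} [Fintype m] (dk : ℝ) (G : SimpleGraph (Fin n))
    (P : Matrix (Fin n) m ℝ) : Prop :=
  ∃ WQ WK : Matrix m m ℝ, ∀ i j,
    (∀ l, attn dk P WQ WK i l ≤ attn dk P WQ WK i j) ↔ G.Adj i j

/-!
The Laplacian has the degree `deg i > 0` on the diagonal and `-1` or `0` off it, so the
diagonal entry is the unique maximum of each row. Negating `W^Q` negates the attention matrix,
and in `-L` the maximum of row `i` is `1`, attained exactly at the neighbours of `i`
(which exist since `deg i > 0`), while the diagonal entry `-deg i` is negative.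
-/

namespace SimpleGraph

variable {V R : Type*} [Fintype V] [DecidableEq V] (G : SimpleGraph V) [DecidableRel G.Adj]
  {i j : V}

theorem lapMatrix_apply_self [AddGroupWithOne R] (i : V) : G.lapMatrix R i i = G.degree i := by
  simp [lapMatrix, degMatrix]

theorem lapMatrix_apply_of_ne [AddGroupWithOne R] (h : i ≠ j) :
    G.lapMatrix R i j = -(if G.Adj i j then 1 else 0) := by
  simp [lapMatrix, degMatrix, h]

variable [Ring R] [LinearOrder R] [IsStrictOrderedRing R]

theorem lapMatrix_apply_le_self (i l : V) : G.lapMatrix R i l ≤ G.lapMatrix R i i := by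
  rcases eq_or_ne i l with rfl | hil
  · exact le_rfl
  rw [G.lapMatrix_apply_of_ne hil, G.lapMatrix_apply_self]
  have : (0 : R) ≤ G.degree i := Nat.cast_nonneg _
  split_ifs
  · exact neg_one_lt_zero.le.trans this
  · rwa [neg_zero]

theorem lapMatrix_apply_lt_self (hi : 0 < G.degree i) (hij : i ≠ j) :
    G.lapMatrix R i j < G.lapMatrix R i i := by
  rw [G.lapMatrix_apply_of_ne hij, G.lapMatrix_apply_self]
  have : (0 : R) < G.degree i := by exact_mod_cast hi
  split_ifs
  · exact neg_one_lt_zero.trans this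
  · rwa [neg_zero]

theorem forall_lapMatrix_apply_le_iff (hi : 0 < G.degree i) :
    (∀ l, G.lapMatrix R i l ≤ G.lapMatrix R i j) ↔ i = j := by
  refine ⟨fun h => ?_, fun hij l => hij ▸ G.lapMatrix_apply_le_self i l⟩
  by_contra hij
  exact (h i).not_gt (G.lapMatrix_apply_lt_self hi hij)

theorem neg_lapMatrix_apply_le_one (i l : V) : -G.lapMatrix R i l ≤ 1 := by
  rcases eq_or_ne i l with rfl | hil
  · rw [G.lapMatrix_apply_self]
    exact (neg_nonpos.2 (Nat.cast_nonneg _)).trans zero_le_one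
  rw [G.lapMatrix_apply_of_ne hil, neg_neg]
  split_ifs <;> simp

theorem neg_lapMatrix_apply_eq_one_iff : -G.lapMatrix R i j = 1 ↔ G.Adj i j := by
  rcases eq_or_ne i j with rfl | hij
  · rw [G.lapMatrix_apply_self]
    have : -(G.degree i : R) < 1 := (neg_nonpos.2 (Nat.cast_nonneg _)).trans_lt zero_lt_one
    simp [this.ne]
  rw [G.lapMatrix_apply_of_ne hij, neg_neg]
  split_ifs with h <;> simp [h]

theorem forall_neg_lapMatrix_apply_le_iff (hi : ∃ w, G.Adj i w) :
    (∀ l, -G.lapMatrix R i l ≤ -G.lapMatrix R i j) ↔ G.Adj i j := by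
  refine ⟨fun h => ?_, fun hij l => ?_⟩
  · obtain ⟨w, hw⟩ := hi
    have hw1 := (G.neg_lapMatrix_apply_eq_one_iff (R := R)).2 hw
    exact (G.neg_lapMatrix_apply_eq_one_iff).1
      (le_antisymm (G.neg_lapMatrix_apply_le_one i j) (hw1 ▸ h w))
  · rw [(G.neg_lapMatrix_apply_eq_one_iff).2 hij]
    exact G.neg_lapMatrix_apply_le_one i l

end SimpleGraph

theorem attn_neg_left {n : ℕ} {m : Type*} [Fintype m] (dk : ℝ) (P : Matrix (Fin n) m ℝ)
    (WQ WK : Matrix m m ℝ) : attn dk P (-WQ) WK = -attn dk P WQ WK := by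
  simp only [attn, Matrix.mul_neg, Matrix.neg_mul, smul_neg]

theorem stmt5_general {n d : ℕ} (G : SimpleGraph (Fin n)) [DecidableRel G.Adj]
    (hdeg : ∀ v, 0 < G.degree v) (dk : ℝ)
    (P : Matrix (Fin n) (Fin d) ℝ) (WQ WK : Matrix (Fin d) (Fin d) ℝ)
    (hfac : (1 / Real.sqrt dk) • ((P * WQ) * (P * WK)ᵀ) = G.lapMatrix ℝ) :
    IsNodeIdentifying dk P ∧ IsAdjIdentifying dk G P := by
  have hL : attn dk P WQ WK = G.lapMatrix ℝ := hfac
  have hLneg : attn dk P (-WQ) WK = -G.lapMatrix ℝ := by rw [attn_neg_left, hL]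
  refine ⟨⟨WQ, WK, fun i j => ?_⟩, ⟨-WQ, WK, fun i j => ?_⟩⟩
  · simpa only [hL] using G.forall_lapMatrix_apply_le_iff (hdeg i)
  · simpa only [hLneg, Matrix.neg_apply] using
      G.forall_neg_lapMatrix_apply_le_iff ((G.degree_pos_iff_exists_adj i).1 (hdeg i))

/-- if `(1/√d_k)·(P W^Q)(P W^K)ᵀ` equals the graph Laplacian for some
`W^Q, W^K`, then `P` is both node-identifying and adjacency-identifying. -/
theorem stmt5 {n d : ℕ} (G : SimpleGraph (Fin n)) [DecidableRel G.Adj]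
    (hdeg : ∀ v, 0 < G.degree v) (dk : ℝ) (hdk : 0 < dk)
    (P : Matrix (Fin n) (Fin d) ℝ) (WQ WK : Matrix (Fin d) (Fin d) ℝ)
    (hfac : (1 / Real.sqrt dk) • ((P * WQ) * (P * WK)ᵀ) = G.lapMatrix ℝ) :
    IsNodeIdentifying dk P ∧ IsAdjIdentifying dk G P :=
  stmt5_general G hdeg dk P WQ WK hfac
end

section
/- Let G be a finite simple graph on vertex set {1,…,n} (no self-loops) in which every vertex has at least one neighbor, with adjacency matrix A, diagonal degree matrix D, graph Laplacian L = D − A, and normalized Laplacian L̃ = I − D^{−1/2} A D^{−1/2}. Suppose L̃ = U Σ Uᵀ where U ∈ ℝ^{n×n} and Σ ∈ ℝ^{n×n} is diagonal with nonnegative entries, and let Σ^{1/2} be the entrywise square root of Σ. Then for every permutation matrix M ∈ {0,1}^{n×n}, the matrix D^{1/2} U Σ^{1/2} M satisfies (D^{1/2} U Σ^{1/2} M)(D^{1/2} U Σ^{1/2} M)ᵀ = D^{1/2} L̃ D^{1/2} = L and is adjacency-identifying. -/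
open Matrix

/-- if the normalized Laplacian `L̃ = I − D^{−1/2} A D^{−1/2}` decomposes as
`L̃ = U Σ Uᵀ` with `Σ` diagonal nonnegative, then for every permutation matrix `M`, the
matrix `D^{1/2} U Σ^{1/2} M` factors `D^{1/2} L̃ D^{1/2} = L` and is adjacency-identifying. -/
theorem stmt9 {n : ℕ} (G : SimpleGraph (Fin n)) [DecidableRel G.Adj]
    (hdeg : ∀ v, 0 < G.degree v) (dk : ℝ) (hdk : 0 < dk)
    (Ltil : Matrix (Fin n) (Fin n) ℝ)
    (hLtil : Ltil = 1 - Matrix.diagonal (fun i => (Real.sqrt (G.degree i))⁻¹) *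
        G.adjMatrix ℝ * Matrix.diagonal (fun i => (Real.sqrt (G.degree i))⁻¹))
    (U : Matrix (Fin n) (Fin n) ℝ) (σ : Fin n → ℝ) (hσ : ∀ i, 0 ≤ σ i)
    (hdecomp : Ltil = U * Matrix.diagonal σ * Uᵀ)
    (M : Matrix (Fin n) (Fin n) ℝ)
    (hM01 : ∀ i j, M i j = 0 ∨ M i j = 1)
    (hMrow : ∀ i, ∃! j, M i j = 1) (hMcol : ∀ j, ∃! i, M i j = 1) :
    (Matrix.diagonal (fun i => Real.sqrt (G.degree i)) * U *
          Matrix.diagonal (fun i => Real.sqrt (σ i)) * M) *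
        (Matrix.diagonal (fun i => Real.sqrt (G.degree i)) * U *
          Matrix.diagonal (fun i => Real.sqrt (σ i)) * M)ᵀ =
      Matrix.diagonal (fun i => Real.sqrt (G.degree i)) * Ltil *
        Matrix.diagonal (fun i => Real.sqrt (G.degree i)) ∧
    Matrix.diagonal (fun i => Real.sqrt (G.degree i)) * Ltil *
        Matrix.diagonal (fun i => Real.sqrt (G.degree i)) = G.lapMatrix ℝ ∧
    IsAdjIdentifying dk G (Matrix.diagonal (fun i => Real.sqrt (G.degree i)) * U *
        Matrix.diagonal (fun i => Real.sqrt (σ i)) * M) := by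
  have hd : ∀ i : Fin n, (0:ℝ) < Real.sqrt (G.degree i) :=
    fun i => Real.sqrt_pos.mpr (by exact_mod_cast hdeg i)
  set D : Matrix (Fin n) (Fin n) ℝ :=
    Matrix.diagonal (fun i => Real.sqrt (G.degree i)) with hD
  set S : Matrix (Fin n) (Fin n) ℝ :=
    Matrix.diagonal (fun i => Real.sqrt (σ i)) with hS
  have hMM : M * Mᵀ = 1 := by
    ext i j
    simp only [Matrix.mul_apply, Matrix.transpose_apply, Matrix.one_apply]
    by_cases h : i = j
    · subst h
      obtain ⟨k0, hk0, huniq⟩ := hMrow i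
      rw [if_pos rfl, Finset.sum_eq_single k0]
      · rw [hk0]; ring
      · intro k _ hk
        rcases hM01 i k with h0 | h1
        · rw [h0, zero_mul]
        · exact absurd (huniq k h1) hk
      · intro h; exact absurd (Finset.mem_univ k0) h
    · rw [if_neg h]
      apply Finset.sum_eq_zero
      intro k _
      rcases hM01 i k with h0 | h1
      · rw [h0, zero_mul]
      · rcases hM01 j k with h0' | h1'
        · rw [h0', mul_zero]
        · obtain ⟨i0, _, huniq⟩ := hMcol k
          exact absurd ((huniq i h1).trans (huniq j h1').symm) h
  have hσfun : (fun i => Real.sqrt (σ i) * Real.sqrt (σ i)) = σ :=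
    funext fun i => Real.mul_self_sqrt (hσ i)
  have hpart1 : (D * U * S * M) * (D * U * S * M)ᵀ = D * Ltil * D := by
    rw [Matrix.transpose_mul, Matrix.transpose_mul, Matrix.transpose_mul, hdecomp, hS, hD]
    simp only [Matrix.diagonal_transpose]
    simp only [Matrix.mul_assoc]
    rw [← Matrix.mul_assoc M Mᵀ, hMM, Matrix.one_mul,
      ← Matrix.mul_assoc (Matrix.diagonal fun i => Real.sqrt (σ i)),
      Matrix.diagonal_mul_diagonal, hσfun]
  have hDDinv : D * Matrix.diagonal (fun i => (Real.sqrt (G.degree i))⁻¹) = 1 := by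
    rw [hD, Matrix.diagonal_mul_diagonal, ← Matrix.diagonal_one]
    exact congrArg _ (funext fun i => mul_inv_cancel₀ (hd i).ne')
  have hDinvD : Matrix.diagonal (fun i => (Real.sqrt (G.degree i))⁻¹) * D = 1 := by
    rw [hD, Matrix.diagonal_mul_diagonal, ← Matrix.diagonal_one]
    exact congrArg _ (funext fun i => inv_mul_cancel₀ (hd i).ne')
  have hpart2 : D * Ltil * D = G.lapMatrix ℝ := by
    rw [hLtil, Matrix.mul_sub, Matrix.sub_mul, Matrix.mul_one]
    have hDD : D * D = G.degMatrix ℝ := by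
      rw [hD, Matrix.diagonal_mul_diagonal]
      unfold SimpleGraph.degMatrix
      exact congrArg _ (funext fun i => Real.mul_self_sqrt (by positivity))
    have hmid : D * (Matrix.diagonal (fun i => (Real.sqrt (G.degree i))⁻¹) *
        G.adjMatrix ℝ * Matrix.diagonal (fun i => (Real.sqrt (G.degree i))⁻¹)) * D =
        G.adjMatrix ℝ := by
      rw [← Matrix.mul_assoc, ← Matrix.mul_assoc, hDDinv, Matrix.one_mul,
        Matrix.mul_assoc, hDinvD, Matrix.mul_one]
    rw [hDD, hmid, SimpleGraph.lapMatrix]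
  refine ⟨hpart1, hpart2, ?_⟩
  -- Part 3: adjacency identifying with WQ = 1, WK = -1
  have hPPt : (D * U * S * M) * (D * U * S * M)ᵀ = G.lapMatrix ℝ :=
    hpart1.trans hpart2
  have hc : (0:ℝ) < 1 / Real.sqrt dk :=
    div_pos one_pos (Real.sqrt_pos.mpr hdk)
  refine ⟨1, -1, fun i j => ?_⟩
  have hattn : ∀ a b, attn dk (D * U * S * M) 1 (-1) a b =
      (1 / Real.sqrt dk) * (-(G.lapMatrix ℝ a b)) := by
    intro a b
    simp only [attn, Matrix.mul_one, Matrix.mul_neg, Matrix.transpose_neg,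
      Matrix.neg_mul, Matrix.mul_neg, hPPt]
    simp [Matrix.mul_one]
  have hL : ∀ a b, G.lapMatrix ℝ a b =
      (if a = b then (G.degree a : ℝ) else 0) - (if G.Adj a b then 1 else 0) := by
    intro a b
    simp [SimpleGraph.lapMatrix, SimpleGraph.degMatrix, Matrix.sub_apply,
      Matrix.diagonal_apply, SimpleGraph.adjMatrix_apply]
  have key : (∀ l, G.lapMatrix ℝ i j ≤ G.lapMatrix ℝ i l) ↔ G.Adj i j := by
    constructor
    · intro h
      obtain ⟨w, hw⟩ := (G.degree_pos_iff_exists_adj i).mp (hdeg i)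
      have hiw : i ≠ w := G.ne_of_adj hw
      have hLiw : G.lapMatrix ℝ i w = -1 := by
        rw [hL, if_neg hiw, if_pos hw]; ring
      have hij : G.lapMatrix ℝ i j ≤ -1 := hLiw ▸ h w
      by_contra hadj
      rw [hL, if_neg hadj] at hij
      by_cases he : i = j
      · rw [if_pos he] at hij
        have : (0:ℝ) < (G.degree i : ℝ) := by exact_mod_cast hdeg i
        linarith
      · rw [if_neg he] at hij; linarith
    · intro hadj l
      have hij : G.lapMatrix ℝ i j = -1 := by
        rw [hL, if_neg (G.ne_of_adj hadj), if_pos hadj]; ring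
      rw [hij, hL]
      have h0 : (0:ℝ) ≤ (G.degree i : ℝ) := by positivity
      by_cases he : i = l <;> by_cases ha : G.Adj i l <;>
        simp [he, ha] <;> linarith
  constructor
  · intro h
    apply key.mp
    intro l
    have := h l
    rw [hattn, hattn] at this
    have h2 := le_of_mul_le_mul_left this hc
    linarith
  · intro hadj l
    rw [hattn, hattn]
    have := key.mpr hadj l
    have : -(G.lapMatrix ℝ i l) ≤ -(G.lapMatrix ℝ i j) := by linarith
    exact mul_le_mul_of_nonneg_left this hc.le
end

section
/- Let G be a finite simple graph on vertex set {1,…,n} (no self-loops) in which every vertex has at least one neighbor. Let P = [Q₁ Q₂] ∈ ℝ^{n×d} be the column-wise concatenation of Q₁ ∈ ℝ^{n×d'} and Q₂ ∈ ℝ^{n×d''} with d = d' + d''. If Q₁ or Q₂ is node-identifying, then P is node-identifying; if Q₁ or Q₂ is adjacency-identifying, then P is adjacency-identifying; and if one of Q₁, Q₂ is node-identifying and the other is adjacency-identifying, then P is both node-identifying and adjacency-identifying. -/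
/-!
Padding the query and key weights of one block by zeros, `W ↦ fromBlocks W 0 0 0`, makes the
attention scores of `[Q₁ Q₂]` coincide with those of `Q₁` (and symmetrically for `Q₂`), so any
weights witnessing identifiability of a block witness it for the concatenation.
-/

open Matrix

section

variable {n : ℕ} {m₁ m₂ : Type*} [Fintype m₁] [Fintype m₂] {dk : ℝ}
  {Q₁ : Matrix (Fin n) m₁ ℝ} {Q₂ : Matrix (Fin n) m₂ ℝ}

theorem attn_fromCols_fromBlocks_left (WQ WK : Matrix m₁ m₁ ℝ) :
    attn dk (fromCols Q₁ Q₂) (fromBlocks WQ 0 0 0) (fromBlocks WK 0 0 0) = attn dk Q₁ WQ WK := by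
  simp [attn, fromCols_mul_fromBlocks, transpose_fromCols, fromCols_mul_fromRows]

theorem attn_fromCols_fromBlocks_right (WQ WK : Matrix m₂ m₂ ℝ) :
    attn dk (fromCols Q₁ Q₂) (fromBlocks 0 0 0 WQ) (fromBlocks 0 0 0 WK) = attn dk Q₂ WQ WK := by
  simp [attn, fromCols_mul_fromBlocks, transpose_fromCols, fromCols_mul_fromRows]

theorem IsNodeIdentifying.fromCols_left (h : IsNodeIdentifying dk Q₁) :
    IsNodeIdentifying dk (fromCols Q₁ Q₂) :=
  let ⟨WQ, WK, hW⟩ := h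
  ⟨_, _, (attn_fromCols_fromBlocks_left (Q₂ := Q₂) WQ WK).symm ▸ hW⟩

theorem IsNodeIdentifying.fromCols_right (h : IsNodeIdentifying dk Q₂) :
    IsNodeIdentifying dk (fromCols Q₁ Q₂) :=
  let ⟨WQ, WK, hW⟩ := h
  ⟨_, _, (attn_fromCols_fromBlocks_right (Q₁ := Q₁) WQ WK).symm ▸ hW⟩

variable {G : SimpleGraph (Fin n)}

theorem IsAdjIdentifying.fromCols_left (h : IsAdjIdentifying dk G Q₁) :
    IsAdjIdentifying dk G (fromCols Q₁ Q₂) :=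
  let ⟨WQ, WK, hW⟩ := h
  ⟨_, _, (attn_fromCols_fromBlocks_left (Q₂ := Q₂) WQ WK).symm ▸ hW⟩

theorem IsAdjIdentifying.fromCols_right (h : IsAdjIdentifying dk G Q₂) :
    IsAdjIdentifying dk G (fromCols Q₁ Q₂) :=
  let ⟨WQ, WK, hW⟩ := h
  ⟨_, _, (attn_fromCols_fromBlocks_right (Q₁ := Q₁) WQ WK).symm ▸ hW⟩

end

theorem stmt10_general {n d1 d2 : ℕ} (G : SimpleGraph (Fin n)) (dk : ℝ)
    (Q1 : Matrix (Fin n) (Fin d1) ℝ) (Q2 : Matrix (Fin n) (Fin d2) ℝ) :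
    ((IsNodeIdentifying dk Q1 ∨ IsNodeIdentifying dk Q2) →
        IsNodeIdentifying dk (Matrix.fromCols Q1 Q2)) ∧
    ((IsAdjIdentifying dk G Q1 ∨ IsAdjIdentifying dk G Q2) →
        IsAdjIdentifying dk G (Matrix.fromCols Q1 Q2)) ∧
    (((IsNodeIdentifying dk Q1 ∧ IsAdjIdentifying dk G Q2) ∨
        (IsAdjIdentifying dk G Q1 ∧ IsNodeIdentifying dk Q2)) →
        IsNodeIdentifying dk (Matrix.fromCols Q1 Q2) ∧
          IsAdjIdentifying dk G (Matrix.fromCols Q1 Q2)) := by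
  refine ⟨fun h => h.elim (·.fromCols_left) (·.fromCols_right),
    fun h => h.elim (·.fromCols_left) (·.fromCols_right), ?_⟩
  rintro (⟨hnode, hadj⟩ | ⟨hadj, hnode⟩)
  · exact ⟨hnode.fromCols_left, hadj.fromCols_right⟩
  · exact ⟨hnode.fromCols_right, hadj.fromCols_left⟩

/-- node/adjacency identifiability is inherited by column-wise
concatenation from either block. -/
theorem stmt10 {n d1 d2 : ℕ} (G : SimpleGraph (Fin n)) [DecidableRel G.Adj]
    (hdeg : ∀ v, 0 < G.degree v) (dk : ℝ) (hdk : 0 < dk)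
    (Q1 : Matrix (Fin n) (Fin d1) ℝ) (Q2 : Matrix (Fin n) (Fin d2) ℝ) :
    ((IsNodeIdentifying dk Q1 ∨ IsNodeIdentifying dk Q2) →
        IsNodeIdentifying dk (Matrix.fromCols Q1 Q2)) ∧
    ((IsAdjIdentifying dk G Q1 ∨ IsAdjIdentifying dk G Q2) →
        IsAdjIdentifying dk G (Matrix.fromCols Q1 Q2)) ∧
    (((IsNodeIdentifying dk Q1 ∧ IsAdjIdentifying dk G Q2) ∨
        (IsAdjIdentifying dk G Q1 ∧ IsNodeIdentifying dk Q2)) →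
        IsNodeIdentifying dk (Matrix.fromCols Q1 Q2) ∧
          IsAdjIdentifying dk G (Matrix.fromCols Q1 Q2)) :=
  stmt10_general G dk Q1 Q2
end

section
/- Let G = (V, E, ℓ) be a labeled graph with n vertices and let k ≥ 2. Then for every t ≥ 1 there exist real scalars β_1,…,β_k, a function g^{(0)} : V^k → ℝ with g^{(0)}(u) = g^{(0)}(v) if and only if C^k_0(u) = C^k_0(v), and functions f_1,…,f_t : ℝ → ℝ such that, defining recursively g^{(s)}(u) = f_s( g^{(s−1)}(u) + ∑_{j=1}^k β_j · ∑_{w ∈ V} g^{(s−1)}(φ_j(u, w)) ) for 1 ≤ s ≤ t, it holds for all s ≤ t and all u, v ∈ V^k that C^k_s(u) = C^k_s(v) if and only if g^{(s)}(u) = g^{(s)}(v). -/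
open Finset

private lemma digitsInj {B : ℕ} (hB : 0 < B) : ∀ {m : ℕ} (d e : Fin m → ℕ),
    (∀ i, d i < B) → (∀ i, e i < B) →
    (∑ i : Fin m, B ^ (i : ℕ) * d i) = (∑ i : Fin m, B ^ (i : ℕ) * e i) → d = e := by
  intro m
  induction m with
  | zero => intro d e _ _ _; funext i; exact i.elim0
  | succ m ih =>
    intro d e hd he hsum
    have hfac : ∀ f : Fin (m + 1) → ℕ,
        ∑ i : Fin (m + 1), B ^ (i : ℕ) * f i
          = f 0 + B * ∑ i : Fin m, B ^ (i : ℕ) * f i.succ := by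
      intro f
      rw [Fin.sum_univ_succ, Finset.mul_sum]
      simp only [Fin.val_zero, pow_zero, one_mul, Fin.val_succ]
      congr 1
      refine Finset.sum_congr rfl fun i _ => ?_
      ring
    rw [hfac d, hfac e] at hsum
    have h0 : d 0 = e 0 := by
      have h := congrArg (· % B) hsum
      simpa [Nat.add_mul_mod_self_left, Nat.mod_eq_of_lt (hd 0),
        Nat.mod_eq_of_lt (he 0)] using h
    have htail : (fun i : Fin m => d i.succ) = (fun i => e i.succ) := by
      apply ih _ _ (fun i => hd i.succ) (fun i => he i.succ)
      have h2 : B * ∑ i : Fin m, B ^ (i : ℕ) * d i.succ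
          = B * ∑ i : Fin m, B ^ (i : ℕ) * e i.succ := by omega
      exact Nat.eq_of_mul_eq_mul_left hB h2
    funext i
    refine Fin.cases h0 (fun i => ?_) i
    exact congrFun htail i

private def θf {n k : ℕ} (C : (Fin k → Fin n) → ℕ) (m : ℕ) : ℕ :=
  ((Finset.univ.image C).filter (· < m)).card

private def cIdx {n k : ℕ} (C : (Fin k → Fin n) → ℕ) (u : Fin k → Fin n) : ℕ :=
  θf C (C u)

private lemma θf_lt {n k : ℕ} (C : (Fin k → Fin n) → ℕ) {a b : ℕ}
    (ha : a ∈ Finset.univ.image C) (hab : a < b) : θf C a < θf C b := by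
  apply Finset.card_lt_card
  constructor
  · intro x hx
    simp only [Finset.mem_filter] at hx ⊢
    exact ⟨hx.1, by omega⟩
  · intro hcon
    have := (Finset.mem_filter.mp (hcon (Finset.mem_filter.mpr ⟨ha, hab⟩))).2
    simp at this
  
private lemma cIdx_lt {n k : ℕ} (C : (Fin k → Fin n) → ℕ) (u : Fin k → Fin n) :
    cIdx C u < n ^ k := by
  have h1 : ((Finset.univ.image C).filter (· < C u)).card < (Finset.univ.image C).card := by
    apply Finset.card_lt_card
    constructor
    · exact Finset.filter_subset _ _
    · intro hcon
      have := (Finset.mem_filter.mp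
        (hcon (Finset.mem_image_of_mem C (Finset.mem_univ u)))).2
      simp at this
  have h2 : (Finset.univ.image C).card ≤ (Finset.univ : Finset (Fin k → Fin n)).card :=
    Finset.card_image_le
  have h3 : (Finset.univ : Finset (Fin k → Fin n)).card = n ^ k := by
    simp [Finset.card_univ, Fintype.card_fun]
  unfold cIdx θf
  omega

private lemma cIdx_eq_iff {n k : ℕ} (C : (Fin k → Fin n) → ℕ) (u v : Fin k → Fin n) :
    cIdx C u = cIdx C v ↔ C u = C v := by
  constructor
  · intro h
    rcases lt_trichotomy (C u) (C v) with h' | h' | h'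
    · exact absurd h (θf_lt C (Finset.mem_image_of_mem C (Finset.mem_univ u)) h').ne
    · exact h'
    · exact absurd h.symm (θf_lt C (Finset.mem_image_of_mem C (Finset.mem_univ v)) h').ne
  · intro h; unfold cIdx; rw [h]

private lemma mapInjOn {θ : ℕ → ℕ} {s : Finset ℕ} (hinj : Set.InjOn θ ↑s)
    {m1 m2 : Multiset ℕ} (h1 : ∀ x ∈ m1, x ∈ s) (h2 : ∀ x ∈ m2, x ∈ s)
    (h : m1.map θ = m2.map θ) : m1 = m2 := by
  classical
  have key : ∀ m : Multiset ℕ, (∀ x ∈ m, x ∈ s) →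
      (m.map θ).map (Function.invFunOn θ ↑s) = m := by
    intro m hm
    rw [Multiset.map_map]
    conv_rhs => rw [← Multiset.map_id m]
    exact Multiset.map_congr rfl fun x hx => hinj.leftInvOn_invFunOn (hm x hx)
  rw [← key m1 h1, h, key m2 h2]

private lemma sumPowInj {n R : ℕ} (f g : Fin n → ℕ)
    (hf : ∀ w, f w < R) (hg : ∀ w, g w < R)
    (h : ∑ w, (n + 2) ^ f w = ∑ w, (n + 2) ^ g w) :
    Finset.univ.val.map f = Finset.univ.val.map g := by
  classical
  have key : ∀ (q : Fin n → ℕ) (hq : ∀ w, q w < R),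
      ∑ w, (n + 2) ^ q w
        = ∑ e : Fin R, (n + 2) ^ (e : ℕ)
            * (Finset.univ.filter fun w => q w = (e : ℕ)).card := by
    intro q hq
    rw [← Finset.sum_fiberwise Finset.univ (fun w => (⟨q w, hq w⟩ : Fin R))
      (fun w => (n + 2) ^ q w)]
    refine Finset.sum_congr rfl fun e _ => ?_
    have hpred : (Finset.univ.filter fun w => (⟨q w, hq w⟩ : Fin R) = e)
        = Finset.univ.filter fun w => q w = (e : ℕ) := by
      apply Finset.filter_congr; intro w _; simp [Fin.ext_iff]
    rw [hpred, Finset.sum_congr rfl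
      (fun w hw => by rw [(Finset.mem_filter.mp hw).2]),
      Finset.sum_const, smul_eq_mul, mul_comm]
  have hcards := digitsInj (B := n + 2) (by omega)
    (fun e : Fin R => (Finset.univ.filter fun w => f w = (e : ℕ)).card)
    (fun e : Fin R => (Finset.univ.filter fun w => g w = (e : ℕ)).card)
    (fun e => by
      show (Finset.univ.filter fun w => f w = (e : ℕ)).card < n + 2
      have hle := Finset.card_filter_le (Finset.univ : Finset (Fin n))
        (fun w => f w = (e : ℕ))
      simp only [Finset.card_univ, Fintype.card_fin] at hle
      omega)
    (fun e => by
      show (Finset.univ.filter fun w => g w = (e : ℕ)).card < n + 2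
      have hle := Finset.card_filter_le (Finset.univ : Finset (Fin n))
        (fun w => g w = (e : ℕ))
      simp only [Finset.card_univ, Fintype.card_fin] at hle
      omega)
    (by rw [← key f hf, ← key g hg]; exact h)
  refine Multiset.ext.mpr fun a => ?_
  by_cases ha : a < R
  · have hc := congrFun hcards ⟨a, ha⟩
    simp only [] at hc
    rw [Multiset.count_map, Multiset.count_map]
    have e1 : Multiset.filter (fun w => a = f w) Finset.univ.val
        = Multiset.filter (fun w => f w = a) Finset.univ.val :=
      Multiset.filter_congr fun x _ => eq_comm
    have e2 : Multiset.filter (fun w => a = g w) Finset.univ.val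
        = Multiset.filter (fun w => g w = a) Finset.univ.val :=
      Multiset.filter_congr fun x _ => eq_comm
    rw [e1, e2]
    exact hc
  · rw [Multiset.count_eq_zero.mpr, Multiset.count_eq_zero.mpr]
    · intro hmem
      obtain ⟨w, _, rfl⟩ := Multiset.mem_map.mp hmem
      exact ha (hg w)
    · intro hmem
      obtain ⟨w, _, rfl⟩ := Multiset.mem_map.mp hmem
      exact ha (hf w)

private def Snat {n k : ℕ} (C : (Fin k → Fin n) → ℕ) (u : Fin k → Fin n) (j : Fin k) : ℕ :=
  ∑ w : Fin n, (n + 2) ^ cIdx C (Function.update u j w)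

private def Anat {n k : ℕ} (C : (Fin k → Fin n) → ℕ) (u : Fin k → Fin n) : ℕ :=
  (n + 2) ^ cIdx C u + ∑ j : Fin k, (n + 2) ^ ((n ^ k + 1) * (j.1 + 1)) * Snat C u j

private lemma anat_key {n k : ℕ} (C : (Fin k → Fin n) → ℕ) (u v : Fin k → Fin n)
    (h : Anat C u = Anat C v) :
    C u = C v ∧ ∀ j : Fin k,
      (Finset.univ.val.map fun w : Fin n => C (Function.update u j w)) =
        (Finset.univ.val.map fun w : Fin n => C (Function.update v j w)) := by
  classical
  have hrep : ∀ x : Fin k → Fin n, Anat C x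
      = ∑ i : Fin (k + 1), ((n + 2) ^ (n ^ k + 1)) ^ (i : ℕ)
          * (Fin.cases ((n + 2) ^ cIdx C x) (Snat C x) i) := by
    intro x
    rw [Fin.sum_univ_succ]
    simp only [Fin.cases_zero, Fin.cases_succ, Fin.val_zero, pow_zero, one_mul,
      Fin.val_succ]
    unfold Anat
    congr 1
    refine Finset.sum_congr rfl fun j _ => ?_
    rw [← pow_mul]
  have hSbound : ∀ (x : Fin k → Fin n) (j : Fin k),
      Snat C x j < (n + 2) ^ (n ^ k + 1) := by
    intro x j
    unfold Snat
    have hp : 0 < (n + 2) ^ (n ^ k) := pow_pos (by omega) _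
    calc ∑ w : Fin n, (n + 2) ^ cIdx C (Function.update x j w)
        ≤ ∑ _w : Fin n, (n + 2) ^ (n ^ k) :=
          Finset.sum_le_sum fun w _ =>
            Nat.pow_le_pow_right (by omega) (le_of_lt (cIdx_lt C _))
      _ = n * (n + 2) ^ (n ^ k) := by
          rw [Finset.sum_const, Finset.card_univ, Fintype.card_fin, smul_eq_mul]
      _ < (n + 2) ^ (n ^ k + 1) := by
          rw [pow_succ]
          nlinarith
  have hD : (Fin.cases ((n + 2) ^ cIdx C u) (Snat C u) : Fin (k + 1) → ℕ)
      = Fin.cases ((n + 2) ^ cIdx C v) (Snat C v) := by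
    refine digitsInj (B := (n + 2) ^ (n ^ k + 1)) (pow_pos (by omega) _) _ _ ?_ ?_ ?_
    · intro i
      induction i using Fin.cases with
      | zero =>
        simp only [Fin.cases_zero]
        exact lt_of_lt_of_le (Nat.pow_lt_pow_right (by omega) (cIdx_lt C u))
          (Nat.pow_le_pow_right (by omega) (Nat.le_succ _))
      | succ j => simp only [Fin.cases_succ]; exact hSbound u j
    · intro i
      induction i using Fin.cases with
      | zero =>
        simp only [Fin.cases_zero]
        exact lt_of_lt_of_le (Nat.pow_lt_pow_right (by omega) (cIdx_lt C v))
          (Nat.pow_le_pow_right (by omega) (Nat.le_succ _))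
      | succ j => simp only [Fin.cases_succ]; exact hSbound v j
    · rw [← hrep u, ← hrep v]; exact h
  constructor
  · have h0 := congrFun hD 0
    simp only [Fin.cases_zero] at h0
    exact (cIdx_eq_iff C u v).mp (Nat.pow_right_injective (by omega) h0)
  · intro j
    have hj := congrFun hD j.succ
    simp only [Fin.cases_succ] at hj
    have hj' : ∑ w : Fin n, (n + 2) ^ cIdx C (Function.update u j w)
        = ∑ w : Fin n, (n + 2) ^ cIdx C (Function.update v j w) := hj
    have hm := sumPowInj (R := n ^ k) _ _
      (fun w => cIdx_lt C (Function.update u j w))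
      (fun w => cIdx_lt C (Function.update v j w)) hj'
    have hinj : Set.InjOn (θf C) ↑(Finset.univ.image C) := by
      intro a ha b hb hab
      rcases lt_trichotomy a b with h' | h' | h'
      · exact absurd hab (θf_lt C (Finset.mem_coe.mp ha) h').ne
      · exact h'
      · exact absurd hab.symm (θf_lt C (Finset.mem_coe.mp hb) h').ne
    refine mapInjOn hinj ?_ ?_ ?_
    · intro x hx
      obtain ⟨w, _, rfl⟩ := Multiset.mem_map.mp hx
      exact Finset.mem_image_of_mem C (Finset.mem_univ _)
    · intro x hx
      obtain ⟨w, _, rfl⟩ := Multiset.mem_map.mp hx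
      exact Finset.mem_image_of_mem C (Finset.mem_univ _)
    · rw [Multiset.map_map, Multiset.map_map]
      simpa [Function.comp, cIdx] using hm


/-- for every `t ≥ 1` there are scalars `β_j`, an initial encoding `g⁰`
consistent with the initial `k`-WL colors, and relabeling functions `f_s` such that the
recursion `g^{(s)}(u) = f_s(g^{(s−1)}(u) + ∑_j β_j ∑_w g^{(s−1)}(φ_j(u,w)))` produces
encodings that coincide exactly when the `k`-WL colors coincide, for all `s ≤ t`. -/
theorem stmt12 {n k : ℕ} (hk : 2 ≤ k) (G : SimpleGraph (Fin n)) (ℓ : Fin n → ℕ)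
    (C : ℕ → (Fin k → Fin n) → ℕ)
    (hC0 : ∀ u v, C 0 u = C 0 v ↔
      ((∀ i j, (u i = u j ↔ v i = v j) ∧ (G.Adj (u i) (u j) ↔ G.Adj (v i) (v j))) ∧
        ∀ i, ℓ (u i) = ℓ (v i)))
    (hCt : ∀ t u v, C (t + 1) u = C (t + 1) v ↔
      (C t u = C t v ∧ ∀ j : Fin k,
        (Finset.univ.val.map fun w : Fin n => C t (Function.update u j w)) =
          (Finset.univ.val.map fun w : Fin n => C t (Function.update v j w)))) :
    ∀ t : ℕ, 1 ≤ t →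
      ∃ (β : Fin k → ℝ) (g : ℕ → (Fin k → Fin n) → ℝ) (f : ℕ → ℝ → ℝ),
        (∀ u v, g 0 u = g 0 v ↔ C 0 u = C 0 v) ∧
        (∀ s, 1 ≤ s → s ≤ t → ∀ u, g s u =
          f s (g (s - 1) u +
            ∑ j : Fin k, β j * ∑ w : Fin n, g (s - 1) (Function.update u j w))) ∧
        (∀ s ≤ t, ∀ u v, C s u = C s v ↔ g s u = g s v) := by
  classical
  intro t _ht
  have gIff : ∀ (s : ℕ) (u v : Fin k → Fin n),
      ((((n + 2) ^ cIdx (C s) u : ℕ) : ℝ) = (((n + 2) ^ cIdx (C s) v : ℕ) : ℝ))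
        ↔ C s u = C s v := by
    intro s u v
    rw [Nat.cast_inj]
    constructor
    · intro h
      exact (cIdx_eq_iff (C s) u v).mp (Nat.pow_right_injective (by omega) h)
    · intro h
      rw [(cIdx_eq_iff (C s) u v).mpr h]
  refine ⟨fun j => (((n + 2) ^ ((n ^ k + 1) * (j.1 + 1)) : ℕ) : ℝ),
    fun s u => (((n + 2) ^ cIdx (C s) u : ℕ) : ℝ),
    fun s x => if h : ∃ u : Fin k → Fin n, ((Anat (C (s - 1)) u : ℕ) : ℝ) = x
      then (((n + 2) ^ cIdx (C s) h.choose : ℕ) : ℝ) else 0,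
    ?_, ?_, ?_⟩
  · intro u v
    exact gIff 0 u v
  · intro s hs _ u
    have hA : (((n + 2) ^ cIdx (C (s - 1)) u : ℕ) : ℝ)
        + ∑ j : Fin k, (((n + 2) ^ ((n ^ k + 1) * (j.1 + 1)) : ℕ) : ℝ)
          * ∑ w : Fin n, (((n + 2) ^ cIdx (C (s - 1)) (Function.update u j w) : ℕ) : ℝ)
        = ((Anat (C (s - 1)) u : ℕ) : ℝ) := by
      unfold Anat Snat
      push_cast
      ring
    show (((n + 2) ^ cIdx (C s) u : ℕ) : ℝ) = _
    rw [hA]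
    beta_reduce
    have hex : ∃ u' : Fin k → Fin n,
        ((Anat (C (s - 1)) u' : ℕ) : ℝ) = ((Anat (C (s - 1)) u : ℕ) : ℝ) := ⟨u, rfl⟩
    rw [dif_pos hex]
    have hAeq : Anat (C (s - 1)) hex.choose = Anat (C (s - 1)) u :=
      Nat.cast_injective hex.choose_spec
    obtain ⟨hc, hmul⟩ := anat_key (C (s - 1)) hex.choose u hAeq
    have hCs : C (s - 1 + 1) hex.choose = C (s - 1 + 1) u :=
      (hCt (s - 1) hex.choose u).mpr ⟨hc, hmul⟩
    have hs1 : s - 1 + 1 = s := by omega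
    rw [hs1] at hCs
    exact (gIff s u hex.choose).mpr hCs.symm
  · intro s _ u v
    exact (gIff s u v).symm
end

section
/- Let G = (V, E, ℓ) be a labeled graph with n vertices and let k ≥ 2. Define an alternative coloring D_t of V^k by: D_0 induces the same partition as C^{δ,k}_0, and D_t(u) = D_t(v) iff D_{t−1}(u) = D_{t−1}(v) and for every j ∈ {1,…,k} both the multisets {{D_{t−1}(φ_j(u, w)) : w ∈ N(u_j)}} and {{D_{t−1}(φ_j(v, w)) : w ∈ N(v_j)}} coincide and the multisets {{D_{t−1}(φ_j(u, w)) : w ∈ V ∖ N(u_j)}} and {{D_{t−1}(φ_j(v, w)) : w ∈ V ∖ N(v_j)}} coincide. Then for every t ≥ 0 and all k-tuples u, v ∈ V^k: D_t(u) = D_t(v) if and only if C^{δ,k}_t(u) = C^{δ,k}_t(v). -/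
/-! Splitting the multiset of pairs `(C(φ_j(u, w)), 1[(u_j, w) ∈ E])` by its second coordinate
yields exactly the multisets of colours over the neighbours and over the non-neighbours of `u_j`.
Colourings inducing the same partition of `V^k` agree on whether two such colour multisets are
equal, so by induction on `t` the refinement conditions for `D` and `C` agree. -/

namespace Multiset

variable {α β β' γ δ : Type*}

theorem map_comp_eq_map_comp_iff {f : α → γ} {g : α → δ} (hfg : ∀ a b, f a = f b ↔ g a = g b)
    (s : Multiset β) (t : Multiset β') (u : β → α) (v : β' → α) :
    s.map (fun x => f (u x)) = t.map (fun y => f (v y)) ↔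
      s.map (fun x => g (u x)) = t.map (fun y => g (v y)) := by
  simp only [← rel_eq, rel_map, hfg]

theorem map_fst_filter_snd_eq [DecidableEq δ] (A B : Multiset γ) {b₁ b₀ : δ} (hb : b₁ ≠ b₀) :
    ((A.map (·, b₁) + B.map (·, b₀)).filter (fun q => q.2 = b₁)).map Prod.fst = A := by
  simp [filter_add, filter_map, hb.symm]

theorem map_pair_add_map_pair_inj {A A' B B' : Multiset γ} {b₁ b₀ : δ} (hb : b₁ ≠ b₀) :
    A.map (·, b₁) + B.map (·, b₀) = A'.map (·, b₁) + B'.map (·, b₀) ↔ A = A' ∧ B = B' := by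
  classical
  refine ⟨fun h => ⟨?_, ?_⟩, fun ⟨hA, hB⟩ => hA ▸ hB ▸ rfl⟩
  · simpa only [map_fst_filter_snd_eq _ _ hb] using
      congrArg (fun m => (m.filter (fun q => q.2 = b₁)).map Prod.fst) h
  · rw [add_comm, add_comm (A'.map _)] at h
    simpa only [map_fst_filter_snd_eq _ _ hb.symm] using
      congrArg (fun m => (m.filter (fun q => q.2 = b₀)).map Prod.fst) h

theorem map_pair_ite_eq_add (s : Multiset β) (p : β → Prop) [DecidablePred p] (f : β → γ)
    (b₁ b₀ : δ) :
    s.map (fun x => (f x, if p x then b₁ else b₀)) =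
      ((s.filter p).map f).map (·, b₁) + ((s.filter (¬p ·)).map f).map (·, b₀) := by
  conv_lhs => rw [← filter_add_not p s]
  rw [map_add, map_map, map_map]
  congr 1 <;> exact map_congr rfl fun x hx => by simp [(mem_filter.mp hx).2]

theorem map_pair_ite_eq_map_pair_ite_iff (s : Multiset β) (t : Multiset β') (p : β → Prop)
    (q : β' → Prop) [DecidablePred p] [DecidablePred q] (f : β → γ) (g : β' → γ)
    {b₁ b₀ : δ} (hb : b₁ ≠ b₀) :
    s.map (fun x => (f x, if p x then b₁ else b₀)) =
        t.map (fun y => (g y, if q y then b₁ else b₀)) ↔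
      (s.filter p).map f = (t.filter q).map g ∧
        (s.filter (¬p ·)).map f = (t.filter (¬q ·)).map g := by
  rw [map_pair_ite_eq_add, map_pair_ite_eq_add, map_pair_add_map_pair_inj hb]

end Multiset

theorem SimpleGraph.map_adj_indicator_eq_iff {V γ : Type*} [Fintype V] [DecidableEq V]
    (G : SimpleGraph V) [DecidableRel G.Adj] (x y : V) (f g : V → γ) :
    (Finset.univ.val.map fun w => (f w, if G.Adj x w then (1 : ℕ) else 0)) =
        (Finset.univ.val.map fun w => (g w, if G.Adj y w then (1 : ℕ) else 0)) ↔
      (G.neighborFinset x).val.map f = (G.neighborFinset y).val.map g ∧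
        (G.neighborFinset x)ᶜ.val.map f = (G.neighborFinset y)ᶜ.val.map g := by
  simp only [Multiset.map_pair_ite_eq_map_pair_ite_iff _ _ _ _ _ _ one_ne_zero,
    neighborFinset_eq_filter, Finset.compl_filter, Finset.filter_val]

theorem stmt13_general {n k : ℕ} (G : SimpleGraph (Fin n)) [DecidableRel G.Adj]
    (C : ℕ → (Fin k → Fin n) → ℕ)
    (hCt : ∀ t u v, C (t + 1) u = C (t + 1) v ↔
      (C t u = C t v ∧ ∀ j : Fin k,
        (Finset.univ.val.map fun w : Fin n =>
            (C t (Function.update u j w), if G.Adj (u j) w then (1 : ℕ) else 0)) =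
          (Finset.univ.val.map fun w : Fin n =>
            (C t (Function.update v j w), if G.Adj (v j) w then (1 : ℕ) else 0))))
    (D : ℕ → (Fin k → Fin n) → ℕ)
    (hD0 : ∀ u v, D 0 u = D 0 v ↔ C 0 u = C 0 v)
    (hDt : ∀ t u v, D (t + 1) u = D (t + 1) v ↔
      (D t u = D t v ∧ ∀ j : Fin k,
        ((G.neighborFinset (u j)).val.map fun w => D t (Function.update u j w)) =
          ((G.neighborFinset (v j)).val.map fun w => D t (Function.update v j w)) ∧
        (((G.neighborFinset (u j))ᶜ).val.map fun w => D t (Function.update u j w)) =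
          (((G.neighborFinset (v j))ᶜ).val.map fun w => D t (Function.update v j w)))) :
    ∀ t u v, D t u = D t v ↔ C t u = C t v := by
  intro t
  induction t with
  | zero => exact hD0
  | succ t ih =>
    intro u v
    rw [hDt, hCt, ih]
    refine and_congr_right fun _ => forall_congr' fun j => ?_
    rw [G.map_adj_indicator_eq_iff,
      Multiset.map_comp_eq_map_comp_iff ih _ _ (Function.update u j) (Function.update v j),
      Multiset.map_comp_eq_map_comp_iff ih _ _ (Function.update u j) (Function.update v j)]

/-- the coloring `D`, refining by the two multisets of local (neighbor)
and global (non-neighbor) `j`-neighbor colors, induces at every iteration the same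
partition of `V^k` as the `δ`-`k`-WL coloring `C`. -/
theorem stmt13 {n k : ℕ} (hk : 2 ≤ k) (G : SimpleGraph (Fin n)) [DecidableRel G.Adj]
    (ℓ : Fin n → ℕ)
    (C : ℕ → (Fin k → Fin n) → ℕ)
    (hC0 : ∀ u v, C 0 u = C 0 v ↔
      ((∀ i j, (u i = u j ↔ v i = v j) ∧ (G.Adj (u i) (u j) ↔ G.Adj (v i) (v j))) ∧
        ∀ i, ℓ (u i) = ℓ (v i)))
    (hCt : ∀ t u v, C (t + 1) u = C (t + 1) v ↔
      (C t u = C t v ∧ ∀ j : Fin k,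
        (Finset.univ.val.map fun w : Fin n =>
            (C t (Function.update u j w), if G.Adj (u j) w then (1 : ℕ) else 0)) =
          (Finset.univ.val.map fun w : Fin n =>
            (C t (Function.update v j w), if G.Adj (v j) w then (1 : ℕ) else 0))))
    (D : ℕ → (Fin k → Fin n) → ℕ)
    (hD0 : ∀ u v, D 0 u = D 0 v ↔ C 0 u = C 0 v)
    (hDt : ∀ t u v, D (t + 1) u = D (t + 1) v ↔
      (D t u = D t v ∧ ∀ j : Fin k,
        ((G.neighborFinset (u j)).val.map fun w => D t (Function.update u j w)) =
          ((G.neighborFinset (v j)).val.map fun w => D t (Function.update v j w)) ∧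
        (((G.neighborFinset (u j))ᶜ).val.map fun w => D t (Function.update u j w)) =
          (((G.neighborFinset (v j))ᶜ).val.map fun w => D t (Function.update v j w)))) :
    ∀ t u v, D t u = D t v ↔ C t u = C t v :=
  stmt13_general G C hCt D hD0 hDt
end

section
/- Let G = (V, E, ℓ) be a labeled graph with n vertices and let k ≥ 2. Then for every t ≥ 1 there exist real scalars α_1,…,α_k, β_1,…,β_k, a function g^{(0)} : V^k → ℝ with g^{(0)}(u) = g^{(0)}(v) if and only if C^{δ,k}_0(u) = C^{δ,k}_0(v), and functions f_1,…,f_t : ℝ → ℝ such that, defining recursively g^{(s)}(u) = f_s( g^{(s−1)}(u) + ∑_{j=1}^k ( α_j · ∑_{w ∈ N(u_j)} g^{(s−1)}(φ_j(u, w)) + β_j · ∑_{w ∈ V ∖ N(u_j)} g^{(s−1)}(φ_j(u, w)) ) ) for 1 ≤ s ≤ t, it holds for all s ≤ t and all u, v ∈ V^k that C^{δ,k}_s(u) = C^{δ,k}_s(v) if and only if g^{(s)}(u) = g^{(s)}(v). -/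
/-!
Encode the colour of a `k`-tuple `u` in round `s` as `B ^ r(u)`, where `r(u) < M = |V|^k` ranks the
colour classes. With `α_j = B ^ (M * code (j, 1))` and `β_j = B ^ (M * code (j, 0))`, for an injective
`code`, the aggregate of `u` is `∑ B ^ (M * code(tag) + rank)` over the multiset containing `u` itself
(untagged) and every `φ_j(u, w)`, tagged with `j` and the adjacency bit `1[(u_j, w) ∈ E]`. This
multiset has `k|V| + 1 < B` elements, so base-`B` digits recover it from the aggregate, and
with it the old colour of `u` and all its δ-`k`-WL multisets, hence the new colour of `u`. So the next
encoding is a function `f_s` of the aggregate.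
-/

open Finset

theorem Nat.ofDigits_map_range (B N : ℕ) (f : ℕ → ℕ) :
    Nat.ofDigits B ((List.range N).map f) = ∑ p ∈ range N, f p * B ^ p := by
  induction N with
  | zero => simp
  | succ N ih =>
    simp [List.range_succ, Nat.ofDigits_append, ih, Finset.sum_range_succ, mul_comm]

namespace Multiset

theorem sum_map_pow_eq_ofDigits_count {B N : ℕ} {s : Multiset ℕ} (hs : ∀ x ∈ s, x < N) :
    (s.map (B ^ ·)).sum = Nat.ofDigits B ((List.range N).map (s.count ·)) := by
  rw [Nat.ofDigits_map_range, Finset.sum_multiset_map_count]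
  refine Finset.sum_subset (fun x hx => mem_range.2 (hs x (mem_toFinset.1 hx))) ?_
  intro x _ hx
  simp [count_eq_zero.2 (mt mem_toFinset.2 hx)]

theorem eq_of_sum_map_pow_eq {B : ℕ} {s t : Multiset ℕ} (hs : card s < B) (ht : card t < B)
    (h : (s.map (B ^ ·)).sum = (t.map (B ^ ·)).sum) : s = t := by
  obtain hB | hB := le_or_gt B 1
  · rw [card_eq_zero.1 (by omega : card s = 0), card_eq_zero.1 (by omega : card t = 0)]
  obtain ⟨N, hN⟩ : ∃ N, ∀ x ∈ s + t, x < N :=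
    ⟨(s + t).toFinset.sup id + 1, fun x hx =>
      Nat.lt_succ_of_le (Finset.le_sup (f := id) (mem_toFinset.2 hx))⟩
  have hdigit : ∀ m : Multiset ℕ, card m < B → ∀ d ∈ (List.range N).map (m.count ·), d < B := by
    intro m hm d hd
    obtain ⟨x, -, rfl⟩ := List.mem_map.1 hd
    exact (count_le_card x m).trans_lt hm
  have hcounts := Nat.ofDigits_inj_of_len_eq hB (by simp) (hdigit s hs) (hdigit t ht) <| by
    rwa [← sum_map_pow_eq_ofDigits_count fun x hx => hN x (mem_add.2 (.inl hx)),
      ← sum_map_pow_eq_ofDigits_count fun x hx => hN x (mem_add.2 (.inr hx))]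
  ext x
  by_cases hx : x < N
  · simpa [hx] using congrArg (·[x]?) hcounts
  · rw [count_eq_zero.2 fun h => hx (hN x (mem_add.2 (.inl h))),
      count_eq_zero.2 fun h => hx (hN x (mem_add.2 (.inr h)))]

theorem sum_map_finsetSum {ι α M : Type*} [AddCommMonoid M] (s : Finset ι)
    (m : ι → Multiset α) (g : α → M) :
    ((∑ i ∈ s, m i).map g).sum = ∑ i ∈ s, ((m i).map g).sum :=
  map_sum (sumAddMonoidHom.comp (mapAddMonoidHom g)) m s

end Multiset

theorem Encodable.mul_encode_add_injective (τ : Type*) [Encodable τ] (M : ℕ) :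
    Function.Injective fun p : τ × Fin M => M * encode p.1 + (p.2 : ℕ) := by
  rintro ⟨a, b⟩ ⟨a', b'⟩ h
  have hb : (b : ℕ) = b' := by
    simpa [Nat.mul_add_mod, Nat.mod_eq_of_lt b.isLt, Nat.mod_eq_of_lt b'.isLt] using
      congrArg (· % M) h
  have ha : encode a = encode a' := by
    simpa [Nat.mul_add_div b.pos, Nat.div_eq_of_lt b.isLt, Nat.div_eq_of_lt b'.isLt] using
      congrArg (· / M) h
  rw [encode_injective ha, Fin.ext hb]

section ColorRank

variable {X κ : Type*} [Fintype X]

noncomputable def colorRank (c : X → κ) (u : X) : Fin (Fintype.card X) :=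
  -- the instance is a proof, so the value depends on `u` only through `c u`
  haveI : Nonempty X := ⟨u⟩
  Fintype.equivFin X (Function.invFun c (c u))

theorem comp_colorRank (c : X → κ) : (c ∘ (Fintype.equivFin X).symm) ∘ colorRank c = c := by
  funext u
  have : Nonempty X := ⟨u⟩
  simp [colorRank, Function.invFun_eq ⟨u, rfl⟩]

theorem colorRank_eq_iff {c : X → κ} {u v : X} : colorRank c u = colorRank c v ↔ c u = c v := by
  refine ⟨fun h => ?_, fun h => by simp only [colorRank, h]⟩
  rw [← congrFun (comp_colorRank c) u, ← congrFun (comp_colorRank c) v, Function.comp_apply, h]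
  rfl

noncomputable def rankEncoding (B : ℕ) (c : X → κ) (u : X) : ℝ := (B : ℝ) ^ (colorRank c u : ℕ)

theorem rankEncoding_eq_iff {B : ℕ} (hB : 1 < B) {c : X → κ} {u v : X} :
    rankEncoding B c u = rankEncoding B c v ↔ c u = c v := by
  rw [rankEncoding, rankEncoding, pow_right_inj₀ (by positivity) (by exact_mod_cast hB.ne'),
    Fin.val_inj, colorRank_eq_iff]

end ColorRank

namespace DeltaWL

variable {V : Type*} [Fintype V] (G : SimpleGraph V) [DecidableRel G.Adj] {k : ℕ} {κ : Type*}

def wlMultiset (c : (Fin k → V) → κ) (u : Fin k → V) (j : Fin k) : Multiset (κ × ℕ) :=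
  univ.val.map fun w => (c (Function.update u j w), if G.Adj (u j) w then 1 else 0)

theorem wlMultiset_comp {γ : Type*} (σ : κ → γ) (c : (Fin k → V) → κ) (u : Fin k → V)
    (j : Fin k) : wlMultiset G (σ ∘ c) u j = (wlMultiset G c u j).map (Prod.map σ id) := by
  simp [wlMultiset, Multiset.map_map]

def taggedMultiset (c : (Fin k → V) → κ) (u : Fin k → V) : Multiset (Option (Fin k × ℕ) × κ) :=
  (none, c u) ::ₘ ∑ j, (wlMultiset G c u j).map fun p => (some (j, p.2), p.1)

theorem card_taggedMultiset (c : (Fin k → V) → κ) (u : Fin k → V) :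
    Multiset.card (taggedMultiset G c u) = k * Fintype.card V + 1 := by
  simp [taggedMultiset, wlMultiset, Multiset.card_sum]

theorem count_taggedMultiset [DecidableEq κ] (c : (Fin k → V) → κ) (u : Fin k → V) (j : Fin k)
    (x : κ × ℕ) :
    (taggedMultiset G c u).count (some (j, x.2), x.1) = (wlMultiset G c u j).count x := by
  rw [taggedMultiset, Multiset.count_cons_of_ne (by simp), Multiset.count_sum',
    Finset.sum_eq_single j]
  · exact Multiset.count_map_eq_count' _ _
      (fun p q h => by simpa [Prod.ext_iff, and_comm] using h) x
  · intro i _ hij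
    simp [hij]
  · simp

theorem eq_and_wlMultiset_eq_of_taggedMultiset_eq {c : (Fin k → V) → κ} {u v : Fin k → V}
    (h : taggedMultiset G c u = taggedMultiset G c v) :
    c u = c v ∧ ∀ j, wlMultiset G c u j = wlMultiset G c v j := by
  classical
  refine ⟨?_, fun j => Multiset.ext.2 fun x => ?_⟩
  · have hu : (none, c u) ∈ taggedMultiset G c v := h ▸ Multiset.mem_cons_self _ _
    simpa [taggedMultiset, Multiset.mem_sum] using hu
  · rw [← count_taggedMultiset, h, count_taggedMultiset]

variable [DecidableEq V]

def aggregate (α β : Fin k → ℝ) (g : (Fin k → V) → ℝ) (u : Fin k → V) : ℝ :=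
  g u + ∑ j, (α j * ∑ w ∈ G.neighborFinset (u j), g (Function.update u j w) +
    β j * ∑ w ∈ (G.neighborFinset (u j))ᶜ, g (Function.update u j w))

def tagWeight (B M : ℕ) (j : Fin k) (i : ℕ) : ℝ :=
  (B : ℝ) ^ (M * Encodable.encode (some (j, i)))

theorem aggregate_pow_eq_sum {B M : ℕ} (r : (Fin k → V) → Fin M) (u : Fin k → V) :
    aggregate G (tagWeight B M · 1) (tagWeight B M · 0) (fun v => (B : ℝ) ^ (r v : ℕ)) u =
      ((taggedMultiset G r u).map fun p => (B : ℝ) ^ (M * Encodable.encode p.1 + p.2)).sum := by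
  simp only [aggregate, taggedMultiset, wlMultiset, Multiset.map_cons, Multiset.sum_cons,
    Multiset.sum_map_finsetSum, Multiset.map_map, Function.comp_def, Encodable.encode_none,
    mul_zero, zero_add]
  congr 1
  refine Finset.sum_congr rfl fun j _ => ?_
  simp only [Finset.sum_map_val, pow_add, SimpleGraph.neighborFinset_eq_filter,
    Finset.compl_filter, tagWeight, Finset.mul_sum]
  rw [← Finset.sum_filter_add_sum_filter_not univ (G.Adj (u j))]
  congr 1 <;> refine Finset.sum_congr rfl fun w hw => ?_ <;> simp_all

theorem taggedMultiset_eq_of_aggregate_pow_eq {B M : ℕ} (hB : k * Fintype.card V + 1 < B)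
    (r : (Fin k → V) → Fin M) {u v : Fin k → V}
    (h : aggregate G (tagWeight B M · 1) (tagWeight B M · 0) (fun v => (B : ℝ) ^ (r v : ℕ)) u =
      aggregate G (tagWeight B M · 1) (tagWeight B M · 0) (fun v => (B : ℝ) ^ (r v : ℕ)) v) :
    taggedMultiset G r u = taggedMultiset G r v := by
  rw [aggregate_pow_eq_sum, aggregate_pow_eq_sum] at h
  refine Multiset.map_injective (Encodable.mul_encode_add_injective _ M) <|
    Multiset.eq_of_sum_map_pow_eq (B := B) (by simpa [card_taggedMultiset])
      (by simpa [card_taggedMultiset]) (Nat.cast_injective (R := ℝ) ?_)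
  simpa [Nat.cast_multiset_sum, Multiset.map_map, Function.comp_def] using h

theorem factorsThrough_aggregate (C : ℕ → (Fin k → V) → κ) (s : ℕ)
    (hC : ∀ u v, (C s u = C s v ∧ ∀ j, wlMultiset G (C s) u j = wlMultiset G (C s) v j) →
      C (s + 1) u = C (s + 1) v)
    {B : ℕ} (hB : k * Fintype.card V + 1 < B) :
    (rankEncoding B (C (s + 1))).FactorsThrough
      (aggregate G (tagWeight B (Fintype.card (Fin k → V)) · 1)
        (tagWeight B (Fintype.card (Fin k → V)) · 0) (rankEncoding B (C s))) := by
  intro u v h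
  obtain ⟨hrank, hwl⟩ := eq_and_wlMultiset_eq_of_taggedMultiset_eq G
    (taggedMultiset_eq_of_aggregate_pow_eq G hB (colorRank (C s)) h)
  rw [rankEncoding_eq_iff (by omega)]
  refine hC u v ⟨colorRank_eq_iff.1 hrank, fun j => ?_⟩
  rw [← comp_colorRank (C s), wlMultiset_comp, wlMultiset_comp, hwl j]

end DeltaWL

open DeltaWL

theorem stmt14_general {n k : ℕ} (G : SimpleGraph (Fin n)) [DecidableRel G.Adj]
    (C : ℕ → (Fin k → Fin n) → ℕ)
    (hCt : ∀ t u v, C (t + 1) u = C (t + 1) v ↔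
      (C t u = C t v ∧ ∀ j : Fin k,
        (Finset.univ.val.map fun w : Fin n =>
            (C t (Function.update u j w), if G.Adj (u j) w then (1 : ℕ) else 0)) =
          (Finset.univ.val.map fun w : Fin n =>
            (C t (Function.update v j w), if G.Adj (v j) w then (1 : ℕ) else 0)))) :
    ∀ t : ℕ, 1 ≤ t →
      ∃ (α β : Fin k → ℝ) (g : ℕ → (Fin k → Fin n) → ℝ) (f : ℕ → ℝ → ℝ),
        (∀ u v, g 0 u = g 0 v ↔ C 0 u = C 0 v) ∧
        (∀ s, 1 ≤ s → s ≤ t → ∀ u, g s u =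
          f s (g (s - 1) u +
            ∑ j : Fin k,
              (α j * ∑ w ∈ G.neighborFinset (u j), g (s - 1) (Function.update u j w) +
               β j * ∑ w ∈ (G.neighborFinset (u j))ᶜ, g (s - 1) (Function.update u j w)))) ∧
        (∀ s ≤ t, ∀ u v, C s u = C s v ↔ g s u = g s v) := by
  intro t _
  obtain ⟨B, hB⟩ : ∃ B, k * Fintype.card (Fin n) + 1 < B := ⟨_, Nat.lt_succ_self _⟩
  set M := Fintype.card (Fin k → Fin n)
  refine ⟨(tagWeight B M · 1), (tagWeight B M · 0), fun s => rankEncoding B (C s),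
    fun s => Function.extend
      (aggregate G (tagWeight B M · 1) (tagWeight B M · 0) (rankEncoding B (C (s - 1))))
      (rankEncoding B (C s)) 0,
    fun u v => rankEncoding_eq_iff (by omega), ?_,
    fun s _ u v => (rankEncoding_eq_iff (by omega)).symm⟩
  intro s hs _ u
  obtain ⟨s, rfl⟩ := Nat.exists_eq_add_of_le' hs
  exact ((factorsThrough_aggregate G C s (fun u v => (hCt s u v).2) hB).extend_apply 0 u).symm

/-- for every `t ≥ 1` there are scalars `α_j, β_j`, an initial encoding `g⁰`
consistent with the initial `δ`-`k`-WL colors, and relabeling functions `f_s` such that the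
recursion `g^{(s)}(u) = f_s(g^{(s−1)}(u) + ∑_j (α_j ∑_{w ∈ N(u_j)} g^{(s−1)}(φ_j(u,w)) +
β_j ∑_{w ∉ N(u_j)} g^{(s−1)}(φ_j(u,w))))` produces encodings that coincide exactly when
the `δ`-`k`-WL colors coincide, for all `s ≤ t`. -/
theorem stmt14 {n k : ℕ} (hk : 2 ≤ k) (G : SimpleGraph (Fin n)) [DecidableRel G.Adj]
    (ℓ : Fin n → ℕ)
    (C : ℕ → (Fin k → Fin n) → ℕ)
    (hC0 : ∀ u v, C 0 u = C 0 v ↔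
      ((∀ i j, (u i = u j ↔ v i = v j) ∧ (G.Adj (u i) (u j) ↔ G.Adj (v i) (v j))) ∧
        ∀ i, ℓ (u i) = ℓ (v i)))
    (hCt : ∀ t u v, C (t + 1) u = C (t + 1) v ↔
      (C t u = C t v ∧ ∀ j : Fin k,
        (Finset.univ.val.map fun w : Fin n =>
            (C t (Function.update u j w), if G.Adj (u j) w then (1 : ℕ) else 0)) =
          (Finset.univ.val.map fun w : Fin n =>
            (C t (Function.update v j w), if G.Adj (v j) w then (1 : ℕ) else 0)))) :
    ∀ t : ℕ, 1 ≤ t →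
      ∃ (α β : Fin k → ℝ) (g : ℕ → (Fin k → Fin n) → ℝ) (f : ℕ → ℝ → ℝ),
        (∀ u v, g 0 u = g 0 v ↔ C 0 u = C 0 v) ∧
        (∀ s, 1 ≤ s → s ≤ t → ∀ u, g s u =
          f s (g (s - 1) u +
            ∑ j : Fin k,
              (α j * ∑ w ∈ G.neighborFinset (u j), g (s - 1) (Function.update u j w) +
               β j * ∑ w ∈ (G.neighborFinset (u j))ᶜ, g (s - 1) (Function.update u j w)))) ∧
        (∀ s ≤ t, ∀ u v, C s u = C s v ↔ g s u = g s v) :=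
  stmt14_general G C hCt
end
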